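/- Let G be a connected simple graph, f a maximal null coloring of G, and w a vertex of G such that no cycle of G passes through w and no other vertex of G has the color f(w). Then for every connected component H of the graph G - w (obtained by deleting w), the restriction of f to H is a maximal null coloring of H; moreover, the sets of colors used by f on distinct connected components of G - w are pairwise disjoint. -/

import Mathlib

open SimpleGraph

/-- The number of steps of the walk `W` from a vertex labeled `i` to a vertex labeled `j`
(with respect to the labeling `f`). -/
def colorSteps {V C : Type} [DecidableEq C] {G : SimpleGraph V} (f : V → C)
    {x y : V} (W : G.Walk x y) (i j : C) : ℕ :=
  W.darts.countP fun d => decide (f d.toProd.1 = i ∧ f d.toProd.2 = j)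

/-- A coloring `f` of `G` is a null coloring if for every closed walk `W` and every ordered
pair `(i, j)` of distinct colors, the number of steps of `W` from a vertex colored `i` to a
vertex colored `j` equals the number of steps from a vertex colored `j` to one colored `i`. -/
def IsNullColoring {V C : Type} [DecidableEq C] (G : SimpleGraph V) (f : V → C) : Prop :=
  ∀ (x : V) (W : G.Walk x x) (i j : C), i ≠ j → colorSteps f W i j = colorSteps f W j i

/-- A null coloring is maximal if no null coloring of `G` has more color classes
(the number of color classes of a coloring `g` is `(Set.range g).ncard`). -/
def IsMaximalNullColoring {V C : Type} [DecidableEq C] (G : SimpleGraph V) (f : V → C) : Prop :=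
  IsNullColoring G f ∧
    ∀ (D : Type) [DecidableEq D] (g : V → D), IsNullColoring G g →
      (Set.range g).ncard ≤ (Set.range f).ncard

/-- The quotient graph `G/f`: vertices are the color classes of `f` (identified with the
range of `f`), two distinct classes being adjacent iff some edge of `G` joins them. -/
def quotientGraph {V C : Type} (G : SimpleGraph V) (f : V → C) :
    SimpleGraph (Set.range f) where
  Adj a b := a ≠ b ∧ ∃ x y : V, G.Adj x y ∧ f x = a.1 ∧ f y = b.1
  symm := by
    constructor
    rintro a b ⟨hab, x, y, hxy, hx, hy⟩
    exact ⟨hab.symm, y, x, hxy.symm, hy, hx⟩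
  loopless := by constructor; rintro a ⟨h, -⟩; exact h rfl

/-- The graph obtained from `G` by identifying the vertices `u` and `v` (the merged vertex
is represented by `u`; any loops created are discarded). -/
def identify {V : Type} (G : SimpleGraph V) (u v : V) : SimpleGraph {x : V // x ≠ v} where
  Adj a b := a ≠ b ∧ (G.Adj a.1 b.1 ∨ (a.1 = u ∧ G.Adj v b.1) ∨ (b.1 = u ∧ G.Adj a.1 v))
  symm := by
    constructor
    rintro a b ⟨hab, h⟩
    refine ⟨hab.symm, ?_⟩
    rcases h with h | ⟨ha, hb⟩ | ⟨hb, ha⟩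
    · exact Or.inl h.symm
    · exact Or.inr (Or.inr ⟨ha, hb.symm⟩)
    · exact Or.inr (Or.inl ⟨hb, ha.symm⟩)
  loopless := by constructor; rintro a ⟨h, -⟩; exact h rfl

/-- The quotient map `h : G → G'` corresponding to the identification of `u` and `v`. -/
def identifyMap {V : Type} [DecidableEq V] (u v : V) (huv : u ≠ v) : V → {x : V // x ≠ v} :=
  fun x => if hx : x = v then ⟨u, huv⟩ else ⟨x, hx⟩

/-- The net number of steps of `W` from label `a` to label `b`:  steps from `a` to `b`
minus steps from `b` to `a`. -/
def netCount {V C : Type} [DecidableEq C] {G : SimpleGraph V} (f : V → C)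
    {x y : V} (W : G.Walk x y) (a b : C) : ℤ :=
  (colorSteps f W a b : ℤ) - (colorSteps f W b a : ℤ)

/-!
Nullity of a coloring is decided on cycles: `Walk.bypass` cuts a closed walk into cycles and
edges traversed back and forth, and the latter contribute nothing. Since no cycle passes through
`w`, every cycle of `G` lies in `G - w`, and every cycle of `G - w` lies in a single component.
So a null coloring of such a piece, glued with `f` (under fresh tags) on the rest, is a null
coloring of the whole graph, and maximality of `f` bounds the number of colors of the piece by
the number of colors `f` uses there. Pairing `f` with the component label is also null; by
maximality it has no more classes than `f`, so no color of `f` is shared by two components.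
-/

open Function

variable {V V' C D : Type} {G : SimpleGraph V} {x y z : V}

section colorSteps

variable [DecidableEq C] [DecidableEq D] (F : V → C)

lemma colorSteps_append (W₁ : G.Walk x y) (W₂ : G.Walk y z) (i j : C) :
    colorSteps F (W₁.append W₂) i j = colorSteps F W₁ i j + colorSteps F W₂ i j := by
  simp [colorSteps, List.countP_append]

lemma netCount_append (W₁ : G.Walk x y) (W₂ : G.Walk y z) (i j : C) :
    netCount F (W₁.append W₂) i j = netCount F W₁ i j + netCount F W₂ i j := by
  simp only [netCount, colorSteps_append]
  push_cast
  ring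

lemma netCount_cons_toWalk (hxy : G.Adj x y) (hyx : G.Adj y x) (i j : C) :
    netCount F (Walk.cons hxy hyx.toWalk) i j = 0 := by
  simp only [netCount, colorSteps, Adj.toWalk, Walk.darts_cons, Walk.darts_nil,
    List.countP_cons, List.countP_nil]
  split_ifs <;> grind

lemma colorSteps_congr {F' : V → C} {W : G.Walk x y} (h : ∀ v ∈ W.support, F v = F' v) :
    colorSteps F W = colorSteps F' W := by
  ext i j
  refine List.countP_congr fun d hd => ?_
  rw [h _ (W.dart_fst_mem_support_of_mem_darts hd), h _ (W.dart_snd_mem_support_of_mem_darts hd)]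

lemma colorSteps_map {G' : SimpleGraph V'} (F : V' → C) (φ : G →g G') (W : G.Walk x y) :
    colorSteps F (W.map φ) = colorSteps (F ∘ φ) W := by
  ext i j
  simp [colorSteps, Walk.darts_map, List.countP_map]
  rfl

lemma colorSteps_induce {S : Set V} (W : G.Walk x y) (hW : ∀ v ∈ W.support, v ∈ S) :
    colorSteps (F ∘ Subtype.val) (W.induce S hW) = colorSteps F W := by
  have h := colorSteps_map F (Embedding.induce S).toHom (W.induce S hW)
  rw [Walk.map_induce] at h
  exact h.symm

lemma colorSteps_comp_injective {φ : C → D} (hφ : Injective φ) (W : G.Walk x y) (i j : C) :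
    colorSteps (φ ∘ F) W (φ i) (φ j) = colorSteps F W i j := by
  simp [colorSteps, hφ.eq_iff]

lemma colorSteps_eq_zero_of_notMem_range_left {i : C} (hi : i ∉ Set.range F) (W : G.Walk x y)
    (j : C) : colorSteps F W i j = 0 :=
  List.countP_eq_zero.mpr fun _ _ hd => hi ⟨_, (of_decide_eq_true hd).1⟩

lemma colorSteps_eq_zero_of_notMem_range_right {j : C} (hj : j ∉ Set.range F) (W : G.Walk x y)
    (i : C) : colorSteps F W i j = 0 :=
  List.countP_eq_zero.mpr fun _ _ hd => hj ⟨_, (of_decide_eq_true hd).2⟩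

end colorSteps

section nullColoring

variable [DecidableEq C] [DecidableEq D] {F : V → C}

lemma isNullColoring_iff_netCount :
    IsNullColoring G F ↔ ∀ x (W : G.Walk x x) (i j : C), netCount F W i j = 0 := by
  refine ⟨fun hF x W i j => ?_, fun hF x W i j _ => ?_⟩
  · by_cases hij : i = j
    · rw [hij]
      exact sub_self _
    · simp [netCount, hF x W i j hij]
  · simpa [netCount, sub_eq_zero] using hF x W i j

lemma IsNullColoring.comap {G' : SimpleGraph V'} (hF : IsNullColoring G F) (φ : G' →g G) :
    IsNullColoring G' (F ∘ φ) := fun x W i j hij => by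
  simpa only [colorSteps_map] using hF _ (W.map φ) i j hij

lemma IsNullColoring.comp_injective (hF : IsNullColoring G F) {φ : C → D} (hφ : Injective φ) :
    IsNullColoring G (φ ∘ F) := by
  intro x W p q hpq
  by_cases hp : p ∈ Set.range φ
  · by_cases hq : q ∈ Set.range φ
    · obtain ⟨⟨i, rfl⟩, ⟨j, rfl⟩⟩ := And.intro hp hq
      simp only [colorSteps_comp_injective F hφ]
      exact hF x W i j (ne_of_apply_ne φ hpq)
    · have hq' : q ∉ Set.range (φ ∘ F) := fun h => hq (Set.range_comp_subset_range F φ h)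
      rw [colorSteps_eq_zero_of_notMem_range_right _ hq',
        colorSteps_eq_zero_of_notMem_range_left _ hq']
  · have hp' : p ∉ Set.range (φ ∘ F) := fun h => hp (Set.range_comp_subset_range F φ h)
    rw [colorSteps_eq_zero_of_notMem_range_right _ hp',
      colorSteps_eq_zero_of_notMem_range_left _ hp']

lemma netCount_cons_eq_zero_of_isPath
    (hcyc : ∀ x (W : G.Walk x x), W.IsCycle → ∀ i j : C, netCount F W i j = 0)
    (hxy : G.Adj x y) {p : G.Walk y x} (hp : p.IsPath) (i j : C) :
    netCount F (Walk.cons hxy p) i j = 0 := by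
  by_cases hmem : s(y, x) ∈ p.edges
  · rw [hp.eq_adj_toWalk_of_mem_edges hmem]
    exact netCount_cons_toWalk F hxy _ i j
  · refine hcyc x _ ((Walk.cons_isCycle_iff p hxy).mpr ⟨hp, ?_⟩) i j
    rwa [Sym2.eq_swap]

lemma netCount_bypass [DecidableEq V]
    (hcyc : ∀ x (W : G.Walk x x), W.IsCycle → ∀ i j : C, netCount F W i j = 0)
    (W : G.Walk x y) (i j : C) : netCount F W.bypass i j = netCount F W i j := by
  induction W with
  | nil => rfl
  | @cons u _ _ huv p ih =>
    have hcons {t'} (q : G.Walk _ t') : netCount F (Walk.cons huv q) i j =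
        netCount F (Walk.cons huv Walk.nil) i j + netCount F q i j := by
      rw [← netCount_append, Walk.cons_nil_append]
    rw [Walk.bypass]
    split_ifs with hu
    · have hsplit := netCount_append F (p.bypass.takeUntil u hu) (p.bypass.dropUntil u hu) i j
      rw [p.bypass.take_spec hu] at hsplit
      have hloop := netCount_cons_eq_zero_of_isPath hcyc huv (p.bypass_isPath.takeUntil hu) i j
      linarith [hcons p, hcons (p.bypass.takeUntil u hu)]
    · rw [hcons p.bypass, hcons p, ih]

lemma isNullColoring_of_isCycle
    (hcyc : ∀ x (W : G.Walk x x), W.IsCycle → ∀ i j : C, netCount F W i j = 0) :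
    IsNullColoring G F := by
  classical
  refine isNullColoring_iff_netCount.mpr fun x W i j => ?_
  rw [← netCount_bypass hcyc, Walk.isPath_iff_nil.mp W.bypass_isPath |>.eq_nil]
  rfl

end nullColoring

lemma SimpleGraph.Walk.connectedComponentMk_eq_of_mem_support {v : V} (W : G.Walk x y)
    (hv : v ∈ W.support) : G.connectedComponentMk v = G.connectedComponentMk x := by
  classical
  exact ConnectedComponent.eq.mpr (W.takeUntil v hv).reachable.symm

section maximal

variable [DecidableEq C] {F : V → C}

lemma IsNullColoring.prod_connectedComponentMk [DecidableEq G.ConnectedComponent]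
    (hF : IsNullColoring G F) : IsNullColoring G fun v => (F v, G.connectedComponentMk v) := by
  intro x W i j hij
  have hW : colorSteps (fun v => (F v, G.connectedComponentMk v)) W =
      colorSteps ((·, G.connectedComponentMk x) ∘ F) W :=
    colorSteps_congr _ fun v hv => by rw [W.connectedComponentMk_eq_of_mem_support hv]; rfl
  rw [hW]
  exact hF.comp_injective (Prod.mk_left_injective _) x W i j hij

lemma IsMaximalNullColoring.connectedComponentMk_eq_of_apply_eq [Finite V]
    (hF : IsMaximalNullColoring G F) (hxy : F x = F y) :
    G.connectedComponentMk x = G.connectedComponentMk y := by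
  classical
  set g := fun v => (F v, G.connectedComponentMk v)
  have hle := hF.2 _ g hF.1.prod_connectedComponentMk
  have hfst : Prod.fst '' Set.range g = Set.range F := by rw [← Set.range_comp]; rfl
  have hinj : Set.InjOn Prod.fst (Set.range g) :=
    (Set.ncard_image_iff (Set.toFinite _)).mp ((Set.ncard_image_le).antisymm (hfst ▸ hle))
  exact congrArg Prod.snd (hinj ⟨x, rfl⟩ ⟨y, rfl⟩ hxy)

variable [DecidableEq D]

lemma IsNullColoring.extend {S : Set V}
    (hS : ∀ x (W : G.Walk x x), W.IsCycle → ∀ v ∈ W.support, (v ∈ S ↔ x ∈ S))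
    (hF : IsNullColoring G F) {g : S → D} (hg : IsNullColoring (G.induce S) g) :
    IsNullColoring G (Function.extend Subtype.val (Sum.inl ∘ g) (Sum.inr ∘ F)) := by
  set glued := Function.extend Subtype.val (Sum.inl ∘ g) (Sum.inr ∘ F)
  refine isNullColoring_of_isCycle fun x W hW i j => ?_
  by_cases hx : x ∈ S
  · have hWS : ∀ v ∈ W.support, v ∈ S := fun v hv => (hS x W hW v hv).mpr hx
    have hres : glued ∘ Subtype.val = Sum.inl ∘ g :=
      funext (Subtype.val_injective.extend_apply _ _)
    have hW : colorSteps glued W = colorSteps (Sum.inl ∘ g) (W.induce S hWS) := by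
      rw [← colorSteps_induce _ W hWS, hres]
    unfold netCount
    rw [hW]
    exact isNullColoring_iff_netCount.mp (hg.comp_injective Sum.inl_injective) _ _ i j
  · have hW : colorSteps glued W = colorSteps (Sum.inr ∘ F) W :=
      colorSteps_congr _ fun v hv => extend_apply' _ _ _ fun ⟨a, ha⟩ =>
        hx ((hS x W hW v hv).mp (ha ▸ a.2))
    unfold netCount
    rw [hW]
    exact isNullColoring_iff_netCount.mp (hF.comp_injective Sum.inr_injective) _ _ i j

lemma IsMaximalNullColoring.induce [Finite V] {S : Set V}
    (hS : ∀ x (W : G.Walk x x), W.IsCycle → ∀ v ∈ W.support, (v ∈ S ↔ x ∈ S))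
    (hF : IsMaximalNullColoring G F) : IsMaximalNullColoring (G.induce S) fun v : S => F v := by
  refine ⟨hF.1.comap (Embedding.induce S).toHom, fun D _ g hg => ?_⟩
  have hglue := hF.2 _ _ (hF.1.extend hS hg)
  rw [Set.range_extend Subtype.val_injective, Subtype.range_coe, Set.range_comp, Set.image_comp,
    Set.ncard_union_eq Set.disjoint_image_inl_image_inr,
    Set.ncard_image_of_injective _ Sum.inl_injective,
    Set.ncard_image_of_injective _ Sum.inr_injective] at hglue
  have hsplit : (Set.range F).ncard ≤ (F '' S).ncard + (F '' Sᶜ).ncard := by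
    rw [← Set.image_univ, ← Set.union_compl_self S, Set.image_union]
    exact Set.ncard_union_le _ _
  rw [← Set.image_eq_range]
  omega

end maximal

theorem delete_unique_color_vertex_components_general
    {V C : Type} [Fintype V] [DecidableEq C]
    (G : SimpleGraph V)
    (f : V → C) (hf : IsMaximalNullColoring G f) (w : V)
    (hcyc : ∀ (x : V) (W : G.Walk x x), W.IsCycle → w ∉ W.support) :
    (∀ c : (G.induce {x : V | x ≠ w}).ConnectedComponent,
        IsMaximalNullColoring ((G.induce {x : V | x ≠ w}).induce c.supp)
          (fun y => f y.1.1)) ∧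
    (∀ c₁ c₂ : (G.induce {x : V | x ≠ w}).ConnectedComponent, c₁ ≠ c₂ →
        ∀ x ∈ c₁.supp, ∀ y ∈ c₂.supp, f x.1 ≠ f y.1) := by
  have hf' : IsMaximalNullColoring (G.induce {x : V | x ≠ w}) fun v => f v.1 :=
    hf.induce fun x W hW v hv =>
      have hvW : ∀ u ∈ W.support, u ≠ w := fun u hu huw => hcyc x W hW (huw ▸ hu)
      iff_of_true (hvW v hv) (hvW x W.start_mem_support)
  refine ⟨fun c => hf'.induce fun x W _ v hv => ?_, fun c₁ c₂ hne x hx y hy hxy => hne ?_⟩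
  · simp only [ConnectedComponent.mem_supp_iff, W.connectedComponentMk_eq_of_mem_support hv]
  · rw [← hx, ← hy]
    exact hf'.connectedComponentMk_eq_of_apply_eq hxy

/-- Let `G` be connected, `f` a maximal null coloring, and `w` a vertex lying
on no cycle of `G` whose color is used by no other vertex.  Then (a) the restriction of `f`
to each connected component of `G - w` is a maximal null coloring of that component, and
(b) the sets of colors used by `f` on distinct components of `G - w` are pairwise disjoint. -/
theorem delete_unique_color_vertex_components
    {V C : Type} [Fintype V] [DecidableEq V] [DecidableEq C]
    (G : SimpleGraph V) (hG : G.Connected)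
    (f : V → C) (hf : IsMaximalNullColoring G f) (w : V)
    (hcyc : ∀ (x : V) (W : G.Walk x x), W.IsCycle → w ∉ W.support)
    (huniq : ∀ x : V, x ≠ w → f x ≠ f w) :
    (∀ c : (G.induce {x : V | x ≠ w}).ConnectedComponent,
        IsMaximalNullColoring ((G.induce {x : V | x ≠ w}).induce c.supp)
          (fun y => f y.1.1)) ∧
    (∀ c₁ c₂ : (G.induce {x : V | x ≠ w}).ConnectedComponent, c₁ ≠ c₂ →
        ∀ x ∈ c₁.supp, ∀ y ∈ c₂.supp, f x.1 ≠ f y.1) :=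
  delete_unique_color_vertex_components_general G f hf w hcyc
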